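/- The flattening rewrite system F on typable rewrites over an orthogonal HRS is strongly normalizing: there is no infinite sequence of ↦-steps. -/

import Mathlib

/-!
Measure every rewrite by its weight `w`, with `w(ρ;σ) = w(ρ) + w(σ) + 1`,
`w(ρ σ) = w(ρ)² w(σ)²`, `w(λx.ρ) = w(ρ)` and `w = 1` on multisteps. The rules App1–App3
strictly decrease `w`; Abs keeps `w` but lowers the total number of abstractions lying above
compositions; BetaM and EtaM keep both and are βη-steps inside a multistep. Reading rule symbols
as constants, a typable multistep is a simply typed λ-term, whose βη-reductions terminate by
Tait's reducibility argument. Hence `F` terminates, by a lexicographic combination.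
-/

namespace HOR

/-- Simple types over a set of base types `B`. -/
inductive Ty (B : Type) : Type
  | base : B → Ty B
  | arrow : Ty B → Ty B → Ty B

/-- Simply-typed λ-terms (de Bruijn representation) over a set of constants `C`. -/
inductive Tm (B C : Type) : Type
  | var : ℕ → Tm B C
  | const : C → Tm B C
  | lam : Tm B C → Tm B C
  | app : Tm B C → Tm B C → Tm B C

variable {B C R : Type}

namespace Tm

/-- Shift the free variables with index `≥ c` up by `d`. -/
def shift (d : ℕ) : ℕ → Tm B C → Tm B C
  | c, .var n => if n < c then .var n else .var (n + d)
  | _, .const k => .const k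
  | c, .lam t => .lam (shift d (c+1) t)
  | c, .app t u => .app (shift d c t) (shift d c u)

/-- Capture-avoiding substitution of the term `u` for the variable `k`. -/
def subst : Tm B C → ℕ → Tm B C → Tm B C
  | .var n, k, u => if n = k then shift k 0 u else if k < n then .var (n-1) else .var n
  | .const c, _, _ => .const c
  | .lam t, k, u => .lam (subst t (k+1) u)
  | .app t s, k, u => .app (subst t k u) (subst s k u)

/-- Iterated abstraction `λⁿ.t`. -/
def lamN : ℕ → Tm B C → Tm B C
  | 0, t => t
  | n+1, t => .lam (lamN n t)

/-- Iterated application `t u₁ ⋯ uₙ`. -/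
def apps : Tm B C → List (Tm B C) → Tm B C
  | t, [] => t
  | t, u :: us => apps (.app t u) us

/-- Parallel (simultaneous) substitution. -/
def psubst : (ℕ → Tm B C) → Tm B C → Tm B C
  | σ, .var n => σ n
  | _, .const c => .const c
  | σ, .lam t => .lam (psubst (fun n => match n with | 0 => .var 0 | m+1 => shift 1 0 (σ m)) t)
  | σ, .app t u => .app (psubst σ t) (psubst σ u)

/-- Number of free occurrences of variable `k`. -/
def varCount : Tm B C → ℕ → ℕ
  | .var n, k => if n = k then 1 else 0
  | .const _, _ => 0
  | .lam t, k => varCount t (k+1)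
  | .app t u, k => varCount t k + varCount u k

/-- Head of a term (spine head). -/
def head : Tm B C → Tm B C
  | .app t _ => head t
  | t => t

end Tm

/-- One-step β- or η-reduction, closed under arbitrary contexts. -/
inductive BetaEtaStep : Tm B C → Tm B C → Prop
  | beta : BetaEtaStep (.app (.lam t) u) (t.subst 0 u)
  | eta : BetaEtaStep (.lam (.app (Tm.shift 1 0 t) (.var 0))) t
  | lam : BetaEtaStep t t' → BetaEtaStep (.lam t) (.lam t')
  | appL : BetaEtaStep t t' → BetaEtaStep (.app t u) (.app t' u)
  | appR : BetaEtaStep u u' → BetaEtaStep (.app t u) (.app t u')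

/-- βη-equivalence of terms (the equivalence closure of one-step βη-reduction). -/
def BetaEtaEq : Tm B C → Tm B C → Prop :=
  Relation.ReflTransGen (fun a b => BetaEtaStep a b ∨ BetaEtaStep b a)

/-- Typing of terms (simply-typed λ-calculus over a signature `sig`). -/
inductive TmTy (sig : C → Ty B) : List (Ty B) → Tm B C → Ty B → Prop
  | var : Γ[n]? = some A → TmTy sig Γ (.var n) A
  | const : TmTy sig Γ (.const c) (sig c)
  | lam : TmTy sig (A :: Γ) t B' → TmTy sig Γ (.lam t) (.arrow A B')
  | app : TmTy sig Γ t (.arrow A B') → TmTy sig Γ u A → TmTy sig Γ (.app t u) B'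

mutual
  /-- η-long β-normal (i.e. βη̄-normal) forms. -/
  inductive LongNF {B C : Type} (sig : C → Ty B) : List (Ty B) → Tm B C → Ty B → Prop
    | lam : LongNF sig (A :: Γ) t B' → LongNF sig Γ (.lam t) (.arrow A B')
    | neutral : NeutralNF sig Γ t (.base b) → LongNF sig Γ t (.base b)
  /-- Neutral spines: a variable or constant applied to η-long β-normal arguments. -/
  inductive NeutralNF {B C : Type} (sig : C → Ty B) : List (Ty B) → Tm B C → Ty B → Prop
    | var : Γ[n]? = some A → NeutralNF sig Γ (.var n) A
    | const : NeutralNF sig Γ (.const c) (sig c)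
    | app : NeutralNF sig Γ t (.arrow A B') → LongNF sig Γ u A → NeutralNF sig Γ (.app t u) B'
end

/-- `A = A₁ → ⋯ → Aₙ → β` for some base type `β`. -/
def Ty.baseAfter : ℕ → Ty B → Prop
  | 0, A => ∃ b, A = Ty.base b
  | n+1, A => ∃ A₁ A₂, A = Ty.arrow A₁ A₂ ∧ Ty.baseAfter n A₂

/-- `t` is η-equivalent to the locally bound variable `i < b`. -/
def EtaBoundVar (b : ℕ) (t : Tm B C) (i : ℕ) : Prop :=
  i < b ∧ BetaEtaEq t (.var i)

/-- Pattern condition for the body of a left-hand side with `n` metavariables,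
under `b` local binders: every occurrence of a metavariable is applied to
terms η-equivalent to pairwise distinct locally bound variables. -/
inductive PatternBody (n : ℕ) : ℕ → Tm B C → Prop
  | lam : PatternBody n (b+1) t → PatternBody n b (.lam t)
  | rigidVar : i < b → (∀ u ∈ args, PatternBody n b u) →
      PatternBody n b (Tm.apps (.var i) args)
  | rigidConst : (∀ u ∈ args, PatternBody n b u) →
      PatternBody n b (Tm.apps (.const c) args)
  | flex : b ≤ m → m < b + n →
      (∃ is : List ℕ, is.Nodup ∧ List.Forall₂ (EtaBoundVar b) args is) →
      PatternBody n b (Tm.apps (.var m) args)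

/-- A Higher-order Rewriting System: a signature together with a set of rules
`⟨ϱ, ℓ, r⟩` (indexed by the rule symbols `R`), stored in closed form
`λx₁…xₙ.ℓ`, `λx₁…xₙ.r`, where `ℓ, r` are βη̄-normal terms of the same base type,
`ℓ` is a pattern that is not η-equivalent to a variable, and `fv(r) ⊆ fv(ℓ)`
(ensured by closedness of both sides over the same variables). -/
structure HRS (B C R : Type) where
  sig : C → Ty B
  nargs : R → ℕ
  lhsBody : R → Tm B C
  rhsBody : R → Tm B C
  ruleTy : R → Ty B
  rule_base : ∀ r, Ty.baseAfter (nargs r) (ruleTy r)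
  lhs_nf : ∀ r, LongNF sig [] (Tm.lamN (nargs r) (lhsBody r)) (ruleTy r)
  rhs_nf : ∀ r, LongNF sig [] (Tm.lamN (nargs r) (rhsBody r)) (ruleTy r)
  lhs_pattern : ∀ r, PatternBody (nargs r) 0 (lhsBody r)
  lhs_not_var : ∀ r i, ¬ BetaEtaEq (lhsBody r) (Tm.var i)

/-- The closed left-hand side `λx₁…xₙ.ℓ` of a rule. -/
def HRS.lhs (S : HRS B C R) (r : R) : Tm B C := Tm.lamN (S.nargs r) (S.lhsBody r)

/-- The closed right-hand side `λx₁…xₙ.r` of a rule. -/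
def HRS.rhs (S : HRS B C R) (r : R) : Tm B C := Tm.lamN (S.nargs r) (S.rhsBody r)

/-- Left-linearity: every variable of the left-hand side occurs exactly once. -/
def LeftLinear (S : HRS B C R) : Prop :=
  ∀ r, ∀ i < S.nargs r, Tm.varCount (S.lhsBody r) i = 1

/-- `u` occurs as a subterm under `k` binders. -/
inductive SubtermAt : Tm B C → ℕ → Tm B C → Prop
  | refl : SubtermAt t 0 t
  | lam : SubtermAt t k u → SubtermAt (.lam t) (k+1) u
  | appL : SubtermAt t k u → SubtermAt (.app t s) k u
  | appR : SubtermAt s k u → SubtermAt (.app t s) k u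

/-- No critical pairs: no non-variable subterm of a left-hand side unifies
(modulo βη, renaming apart) with a left-hand side, except trivially. -/
def NoCriticalPairs (S : HRS B C R) : Prop :=
  ∀ r₁ r₂ (k : ℕ) (u : Tm B C), SubtermAt (S.lhsBody r₁) k u →
    ¬ (∃ m, Tm.head u = Tm.var m ∧ k ≤ m) →
    (∃ σ₁ σ₂ : ℕ → Tm B C, (∀ i < k, σ₁ i = .var i) ∧ (∀ i < k, σ₂ i = .var i) ∧
        BetaEtaEq (Tm.psubst σ₁ u) (Tm.psubst σ₂ (Tm.shift k 0 (S.lhsBody r₂)))) →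
    (k = 0 ∧ u = S.lhsBody r₁ ∧ r₁ = r₂)

/-- An HRS is orthogonal when it is left-linear and has no critical pairs. -/
def Orthogonal (S : HRS B C R) : Prop := LeftLinear S ∧ NoCriticalPairs S

/-- The rewrite relation `→R` of an HRS on βη̄-normal terms:
root steps `θℓ → θr` closed under abstraction and application congruence. -/
inductive RStep (S : HRS B C R) : List (Ty B) → Ty B → Tm B C → Tm B C → Prop
  | root : LongNF S.sig Γ s A → LongNF S.sig Γ t A →
      args.length = S.nargs r →
      BetaEtaEq (Tm.apps (S.lhs r) args) s → BetaEtaEq (Tm.apps (S.rhs r) args) t →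
      RStep S Γ A s t
  | absC : RStep S (A :: Γ) B' s t → RStep S Γ (.arrow A B') (.lam s) (.lam t)
  | appL : RStep S Γ (.arrow A B') s t → TmTy S.sig Γ u A →
      RStep S Γ B' (.app s u) (.app t u)
  | appR : TmTy S.sig Γ s (.arrow A B') → RStep S Γ A u v →
      RStep S Γ B' (.app s u) (.app s v)

/-- Typed βη-equivalence judgment `Γ ⊢ s ≐ t : A`. -/
inductive TmEq (sig : C → Ty B) : List (Ty B) → Tm B C → Tm B C → Ty B → Prop
  | beta : TmTy sig (A :: Γ) s B' → TmTy sig Γ t A →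
      TmEq sig Γ (.app (.lam s) t) (s.subst 0 t) B'
  | eta : TmTy sig Γ s (.arrow A B') →
      TmEq sig Γ (.lam (.app (Tm.shift 1 0 s) (.var 0))) s (.arrow A B')
  | refl : TmTy sig Γ s A → TmEq sig Γ s s A
  | symm : TmEq sig Γ s t A → TmEq sig Γ t s A
  | trans : TmEq sig Γ s t A → TmEq sig Γ t u A → TmEq sig Γ s u A
  | congAbs : TmEq sig (A :: Γ) s t B' → TmEq sig Γ (.lam s) (.lam t) (.arrow A B')
  | congApp : TmEq sig Γ s s' (.arrow A B') → TmEq sig Γ t t' A →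
      TmEq sig Γ (.app s t) (.app s' t') B'

/-- Rewrites: variables, constants, rule symbols, abstraction and application
congruences, and composition `ρ;σ`. -/
inductive Rw (B C R : Type) : Type
  | var : ℕ → Rw B C R
  | const : C → Rw B C R
  | rule : R → Rw B C R
  | lam : Rw B C R → Rw B C R
  | app : Rw B C R → Rw B C R → Rw B C R
  | comp : Rw B C R → Rw B C R → Rw B C R

namespace Rw

/-- The source term of a rewrite. -/
def src (S : HRS B C R) : Rw B C R → Tm B C
  | .var n => .var n
  | .const c => .const c
  | .rule r => S.lhs r
  | .lam ρ => .lam (src S ρ)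
  | .app ρ σ => .app (src S ρ) (src S σ)
  | .comp ρ _ => src S ρ

/-- The target term of a rewrite. -/
def tgt (S : HRS B C R) : Rw B C R → Tm B C
  | .var n => .var n
  | .const c => .const c
  | .rule r => S.rhs r
  | .lam ρ => .lam (tgt S ρ)
  | .app ρ σ => .app (tgt S ρ) (tgt S σ)
  | .comp _ σ => tgt S σ

/-- Shift the free variables with index `≥ c` up by `d`. -/
def shiftR (d : ℕ) : ℕ → Rw B C R → Rw B C R
  | c, .var n => if n < c then .var n else .var (n + d)
  | _, .const k => .const k
  | _, .rule r => .rule r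
  | c, .lam ρ => .lam (shiftR d (c+1) ρ)
  | c, .app ρ σ => .app (shiftR d c ρ) (shiftR d c σ)
  | c, .comp ρ σ => .comp (shiftR d c ρ) (shiftR d c σ)

/-- Capture-avoiding substitution of the rewrite `ν` for the variable `k`.
When `ν` is (the coercion of) a term this is rewrite/term substitution `ρ{x\t}`,
and when the rewrite being substituted into is (the coercion of) a term this is
term/rewrite substitution `s⟨x\ρ⟩`. -/
def substR : Rw B C R → ℕ → Rw B C R → Rw B C R
  | .var n, k, ν => if n = k then shiftR k 0 ν else if k < n then .var (n-1) else .var n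
  | .const c, _, _ => .const c
  | .rule r, _, _ => .rule r
  | .lam ρ, k, ν => .lam (substR ρ (k+1) ν)
  | .app ρ σ, k, ν => .app (substR ρ k ν) (substR σ k ν)
  | .comp ρ σ, k, ν => .comp (substR ρ k ν) (substR σ k ν)

/-- Multisteps: rewrites with no occurrence of composition. -/
def IsMultistep : Rw B C R → Prop
  | .lam ρ => IsMultistep ρ
  | .app ρ σ => IsMultistep ρ ∧ IsMultistep σ
  | .comp _ _ => False
  | _ => True

/-- Iterated abstraction. -/
def lamN : ℕ → Rw B C R → Rw B C R
  | 0, ρ => ρ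
  | n+1, ρ => .lam (lamN n ρ)

/-- Iterated application. -/
def apps : Rw B C R → List (Rw B C R) → Rw B C R
  | ρ, [] => ρ
  | ρ, σ :: σs => apps (.app ρ σ) σs

end Rw

/-- Coercion of a term to the (unit/empty) rewrite it denotes. -/
def Tm.toRw : Tm B C → Rw B C R
  | .var n => .var n
  | .const c => .const c
  | .lam t => .lam (toRw t)
  | .app t u => .app (toRw t) (toRw u)

/-- Higher-Order Rewriting Logic: `Γ ⊢ ρ : s → t : A`. -/
inductive RwTy (S : HRS B C R) : List (Ty B) → Rw B C R → Tm B C → Tm B C → Ty B → Prop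
  | var : Γ[n]? = some A → RwTy S Γ (.var n) (.var n) (.var n) A
  | const : RwTy S Γ (.const c) (.const c) (.const c) (S.sig c)
  | rule : RwTy S Γ (.rule r) (S.lhs r) (S.rhs r) (S.ruleTy r)
  | abs : RwTy S (A :: Γ) ρ s t B' → RwTy S Γ (.lam ρ) (.lam s) (.lam t) (.arrow A B')
  | app : RwTy S Γ ρ s₀ s₁ (.arrow A B') → RwTy S Γ σ t₀ t₁ A →
      RwTy S Γ (.app ρ σ) (.app s₀ t₀) (.app s₁ t₁) B'
  | comp : RwTy S Γ ρ s₀ s₁ A → RwTy S Γ σ s₁ s₂ A → RwTy S Γ (.comp ρ σ) s₀ s₂ A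
  | conv : RwTy S Γ ρ s' t' A → TmEq S.sig Γ s s' A → TmEq S.sig Γ t' t A →
      RwTy S Γ ρ s t A

/-- A rewrite is well-typed (typable) if it has some typing judgment. -/
def WT (S : HRS B C R) (ρ : Rw B C R) : Prop := ∃ Γ s t A, RwTy S Γ ρ s t A

/-- Permutation equivalence `ρ ≈ σ` of rewrites: the reflexive, symmetric,
transitive, contextual closure of the axioms IdL, IdR, Assoc, Abs, App,
BetaTR, BetaRT and Eta, each applying only between well-typed rewrites. -/
inductive PermEq (S : HRS B C R) : Rw B C R → Rw B C R → Prop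
  | idL : WT S (.comp (Tm.toRw (Rw.src S ρ)) ρ) → WT S ρ →
      PermEq S (.comp (Tm.toRw (Rw.src S ρ)) ρ) ρ
  | idR : WT S (.comp ρ (Tm.toRw (Rw.tgt S ρ))) → WT S ρ →
      PermEq S (.comp ρ (Tm.toRw (Rw.tgt S ρ))) ρ
  | assoc : WT S (.comp (.comp ρ σ) τ) → WT S (.comp ρ (.comp σ τ)) →
      PermEq S (.comp (.comp ρ σ) τ) (.comp ρ (.comp σ τ))
  | abs : WT S (.comp (.lam ρ) (.lam σ)) → WT S (.lam (.comp ρ σ)) →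
      PermEq S (.comp (.lam ρ) (.lam σ)) (.lam (.comp ρ σ))
  | app : WT S (.comp (.app ρ₁ ρ₂) (.app σ₁ σ₂)) → WT S (.app (.comp ρ₁ σ₁) (.comp ρ₂ σ₂)) →
      PermEq S (.comp (.app ρ₁ ρ₂) (.app σ₁ σ₂)) (.app (.comp ρ₁ σ₁) (.comp ρ₂ σ₂))
  | betaTR : WT S (.app (.lam (Tm.toRw s)) ρ) → WT S (Rw.substR (Tm.toRw s) 0 ρ) →
      PermEq S (.app (.lam (Tm.toRw s)) ρ) (Rw.substR (Tm.toRw s) 0 ρ)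
  | betaRT : WT S (.app (.lam ρ) (Tm.toRw s)) → WT S (Rw.substR ρ 0 (Tm.toRw s)) →
      PermEq S (.app (.lam ρ) (Tm.toRw s)) (Rw.substR ρ 0 (Tm.toRw s))
  | eta : WT S (.lam (.app (Rw.shiftR 1 0 ρ) (.var 0))) → WT S ρ →
      PermEq S (.lam (.app (Rw.shiftR 1 0 ρ) (.var 0))) ρ
  | refl : WT S ρ → PermEq S ρ ρ
  | symm : PermEq S ρ σ → PermEq S σ ρ
  | trans : PermEq S ρ σ → PermEq S σ τ → PermEq S ρ τ
  | congLam : PermEq S ρ ρ' → PermEq S (.lam ρ) (.lam ρ')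
  | congAppL : PermEq S ρ ρ' → WT S σ → PermEq S (.app ρ σ) (.app ρ' σ)
  | congAppR : WT S ρ → PermEq S σ σ' → PermEq S (.app ρ σ) (.app ρ σ')
  | congCompL : PermEq S ρ ρ' → WT S σ → PermEq S (.comp ρ σ) (.comp ρ' σ)
  | congCompR : WT S ρ → PermEq S σ σ' → PermEq S (.comp ρ σ) (.comp ρ σ')

/-- Rewrite/rewrite substitution `ρ⟦x\σ⟧ := ρ{x\src(σ)} ; tgt(ρ)⟨x\σ⟩`. -/
def substRR (S : HRS B C R) (ρ : Rw B C R) (k : ℕ) (σ : Rw B C R) : Rw B C R :=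
  .comp (Rw.substR ρ k (Tm.toRw (Rw.src S σ))) (Rw.substR (Tm.toRw (Rw.tgt S ρ)) k σ)

/-- The rules of the flattening system `F`, closed under arbitrary contexts. -/
inductive FStepRaw (S : HRS B C R) : Rw B C R → Rw B C R → Prop
  | abs : FStepRaw S (.lam (.comp ρ σ)) (.comp (.lam ρ) (.lam σ))
  | app1 : Rw.IsMultistep μ →
      FStepRaw S (.app (.comp ρ σ) μ) (.comp (.app ρ (Tm.toRw (Rw.src S μ))) (.app σ μ))
  | app2 : Rw.IsMultistep μ →
      FStepRaw S (.app μ (.comp ρ σ)) (.comp (.app μ ρ) (.app (Tm.toRw (Rw.tgt S μ)) σ))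
  | app3 : FStepRaw S (.app (.comp ρ₁ ρ₂) (.comp σ₁ σ₂))
      (.comp (.app (.comp ρ₁ ρ₂) (Tm.toRw (Rw.src S σ₁)))
             (.app (Tm.toRw (Rw.tgt S ρ₂)) (.comp σ₁ σ₂)))
  | betaM : Rw.IsMultistep μ → Rw.IsMultistep ν →
      FStepRaw S (.app (.lam μ) ν) (Rw.substR μ 0 ν)
  | etaM : Rw.IsMultistep μ →
      FStepRaw S (.lam (.app (Rw.shiftR 1 0 μ) (.var 0))) μ
  | congLam : FStepRaw S ρ ρ' → FStepRaw S (.lam ρ) (.lam ρ')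
  | congAppL : FStepRaw S ρ ρ' → FStepRaw S (.app ρ σ) (.app ρ' σ)
  | congAppR : FStepRaw S σ σ' → FStepRaw S (.app ρ σ) (.app ρ σ')
  | congCompL : FStepRaw S ρ ρ' → FStepRaw S (.comp ρ σ) (.comp ρ' σ)
  | congCompR : FStepRaw S σ σ' → FStepRaw S (.comp ρ σ) (.comp ρ σ')

/-- A flattening step `ρ ↦ σ` (the system `F` is defined between typable rewrites). -/
def FStep (S : HRS B C R) (ρ σ : Rw B C R) : Prop := FStepRaw S ρ σ ∧ WT S ρ

/-- `↦`-normal forms. -/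
def FNormal (S : HRS B C R) (ρ : Rw B C R) : Prop := ∀ σ, ¬ FStep S ρ σ

/-- `ρ ↦* σ`. -/
def FStar (S : HRS B C R) : Rw B C R → Rw B C R → Prop := Relation.ReflTransGen (FStep S)

open Classical in
/-- `ρ♭`: the `↦`-normal form of `ρ` (when it exists; it is unique for
typable rewrites by strong normalization and confluence of `F`). -/
noncomputable def flatten (S : HRS B C R) (ρ : Rw B C R) : Rw B C R :=
  if h : ∃ σ, FStar S ρ σ ∧ FNormal S σ then h.choose else ρ

/-- Splitting `μ ⋗ μ₁;μ₂` of a multistep. -/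
inductive Split (S : HRS B C R) : Rw B C R → Rw B C R → Rw B C R → Prop
  | var : Split S (.var n) (.var n) (.var n)
  | const : Split S (.const c) (.const c) (.const c)
  | ruleL : Split S (.rule r) (.rule r) (Tm.toRw (S.rhs r))
  | ruleR : Split S (.rule r) (Tm.toRw (S.lhs r)) (.rule r)
  | abs : Split S μ μ₁ μ₂ → Split S (.lam μ) (.lam μ₁) (.lam μ₂)
  | app : Split S μ μ₁ μ₂ → Split S ν ν₁ ν₂ →
      Split S (.app μ ν) (.app μ₁ ν₁) (.app μ₂ ν₂)

/-- Flat permutation equivalence `ρ ∼ σ` between `↦`-normal rewrites: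
generated by associativity and the Perm axiom, closed under reflexivity,
symmetry, transitivity and composition contexts. -/
inductive FlatEq (S : HRS B C R) : Rw B C R → Rw B C R → Prop
  | assoc : FlatEq S (.comp (.comp ρ σ) τ) (.comp ρ (.comp σ τ))
  | perm : Rw.IsMultistep μ → FNormal S μ → Split S μ μ₁ μ₂ →
      FlatEq S μ (.comp (flatten S μ₁) (flatten S μ₂))
  | refl : FlatEq S ρ ρ
  | symm : FlatEq S ρ σ → FlatEq S σ ρ
  | trans : FlatEq S ρ σ → FlatEq S σ τ → FlatEq S ρ τ
  | congCompL : FlatEq S ρ ρ' → FlatEq S (.comp ρ σ) (.comp ρ' σ)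
  | congCompR : FlatEq S σ σ' → FlatEq S (.comp ρ σ) (.comp ρ σ')

/-- Weak projection `μ/ν ⇝ ξ` of coinitial multisteps. -/
inductive WProj (S : HRS B C R) : Rw B C R → Rw B C R → Rw B C R → Prop
  | var : WProj S (.var n) (.var n) (.var n)
  | const : WProj S (.const c) (.const c) (.const c)
  | rule : WProj S (.rule r) (.rule r) (Tm.toRw (S.rhs r))
  | ruleL : WProj S (.rule r) (Tm.toRw (S.lhs r)) (.rule r)
  | ruleR : WProj S (Tm.toRw (S.lhs r)) (.rule r) (Tm.toRw (S.rhs r))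
  | abs : WProj S μ ν ξ → WProj S (.lam μ) (.lam ν) (.lam ξ)
  | app : WProj S μ₁ ν₁ ξ₁ → WProj S μ₂ ν₂ ξ₂ →
      WProj S (.app μ₁ μ₂) (.app ν₁ ν₂) (.app ξ₁ ξ₂)

/-- Compatibility of coinitial multisteps: both are η-expanded β-normal
forms, except that heads may be sources of rules. -/
inductive Compat (S : HRS B C R) : Rw B C R → Rw B C R → Prop
  | cvar : ms.length = ns.length →
      (∀ (i : ℕ) (m n' : Rw B C R), ms[i]? = some m → ns[i]? = some n' → Compat S m n') →
      Compat S (Rw.lamN k (Rw.apps (.var v) ms)) (Rw.lamN k (Rw.apps (.var v) ns))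
  | ccon : ms.length = ns.length →
      (∀ (i : ℕ) (m n' : Rw B C R), ms[i]? = some m → ns[i]? = some n' → Compat S m n') →
      Compat S (Rw.lamN k (Rw.apps (.const c) ms)) (Rw.lamN k (Rw.apps (.const c) ns))
  | crule : ms.length = ns.length →
      (∀ (i : ℕ) (m n' : Rw B C R), ms[i]? = some m → ns[i]? = some n' → Compat S m n') →
      Compat S (Rw.lamN k (Rw.apps (.rule r) ms)) (Rw.lamN k (Rw.apps (.rule r) ns))
  | cruleL : ms.length = ns.length →
      (∀ (i : ℕ) (m n' : Rw B C R), ms[i]? = some m → ns[i]? = some n' → Compat S m n') →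
      Compat S (Rw.lamN k (Rw.apps (.rule r) ms)) (Rw.lamN k (Rw.apps (Tm.toRw (S.lhs r)) ns))
  | cruleR : ms.length = ns.length →
      (∀ (i : ℕ) (m n' : Rw B C R), ms[i]? = some m → ns[i]? = some n' → Compat S m n') →
      Compat S (Rw.lamN k (Rw.apps (Tm.toRw (S.lhs r)) ms)) (Rw.lamN k (Rw.apps (.rule r) ns))

open Classical in
/-- The projection operator `μ/ν` for coinitial multisteps. -/
noncomputable def mproj (S : HRS B C R) (μ ν : Rw B C R) : Rw B C R :=
  if h : ∃ p : Rw B C R × Rw B C R × Rw B C R,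
      flatten S p.1 = flatten S μ ∧ flatten S p.2.1 = flatten S ν ∧ WProj S p.1 p.2.1 p.2.2
  then flatten S h.choose.2.2 else μ

/-- Projection of a flat multistep over a coinitial flat rewrite. -/
noncomputable def proj1 (S : HRS B C R) : Rw B C R → Rw B C R → Rw B C R
  | μ, .comp ρ₁ ρ₂ => proj1 S (proj1 S μ ρ₁) ρ₂
  | μ, ν => mproj S μ ν

/-- Projection of a flat rewrite over a coinitial flat multistep. -/
noncomputable def proj2 (S : HRS B C R) : Rw B C R → Rw B C R → Rw B C R
  | .comp ρ₁ ρ₂, μ => .comp (proj2 S ρ₁ μ) (proj2 S ρ₂ (proj1 S μ ρ₁))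
  | ν, μ => mproj S ν μ

/-- Projection `ρ/σ` of a flat rewrite over a coinitial flat rewrite. -/
noncomputable def proj3 (S : HRS B C R) : Rw B C R → Rw B C R → Rw B C R
  | ρ, .comp σ₁ σ₂ => proj3 S (proj3 S ρ σ₁) σ₂
  | ρ, μ => proj2 S ρ μ

/-- Projection `ρ ⫽ σ := ρ♭ / σ♭` for arbitrary coinitial rewrites. -/
noncomputable def aproj (S : HRS B C R) (ρ σ : Rw B C R) : Rw B C R :=
  proj3 S (flatten S ρ) (flatten S σ)

/-- Flat rewrites: compositions of `↦`-normal (flat) multisteps. -/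
inductive IsFlat (S : HRS B C R) : Rw B C R → Prop
  | ms : Rw.IsMultistep μ → FNormal S μ → IsFlat S μ
  | comp : IsFlat S ρ → IsFlat S σ → IsFlat S (.comp ρ σ)

/-- The rewrite denoted by a sequential rewrite `μ₁;…;μₙ;s̄`. -/
def seqToRw (p : List (Rw B C R) × Tm B C) : Rw B C R :=
  p.1.foldr Rw.comp (Tm.toRw p.2)

/-- Well-formedness of a sequential rewrite: all components are flat multisteps. -/
def SeqOK (S : HRS B C R) (p : List (Rw B C R) × Tm B C) : Prop :=
  (∀ μ ∈ p.1, Rw.IsMultistep μ ∧ FNormal S μ) ∧ FNormal S (Tm.toRw p.2)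

/-- Empty multisteps: those containing no rule symbols, i.e. coerced terms. -/
def EmptyMs (μ : Rw B C R) : Prop := ∃ t : Tm B C, μ = Tm.toRw t

/-- The standardization relation `▷` on sequential rewrites. -/
inductive Std (S : HRS B C R) : List (Rw B C R) × Tm B C → List (Rw B C R) × Tm B C → Prop
  | del : Std S (Tm.toRw t :: l, s) (l, s)
  | pull : FlatEq S μ₁₂ (.comp μ₁ μ₂) → FlatEq S μ₂₃ (.comp μ₂ μ₃) → ¬ EmptyMs μ₂ →
      Std S (μ₁ :: μ₂₃ :: l, s) (μ₁₂ :: μ₃ :: l, s)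
  | cong : Std S (l, s) (l', s) → Std S (μ :: l, s) (μ :: l', s)

/-- Strong equivalence `ρ ≍ σ` of sequential rewrites: same length, same final
term, componentwise flat-permutation-equivalent multisteps. -/
def StrongEq (S : HRS B C R) (p q : List (Rw B C R) × Tm B C) : Prop :=
  p.2 = q.2 ∧ List.Forall₂ (FlatEq S) p.1 q.1

/-- An unfolding of a multistep `μ`: a sequential rewrite of non-empty
multisteps flat-permutation-equivalent to `μ`. -/
def Unfolding (S : HRS B C R) (μ : Rw B C R) (p : List (Rw B C R) × Tm B C) : Prop :=
  SeqOK S p ∧ (∀ ν ∈ p.1, ¬ EmptyMs ν) ∧ FlatEq S μ (seqToRw p)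

/-- The finiteness condition: the lengths of unfoldings of any multistep are bounded. -/
def FinCond (S : HRS B C R) : Prop :=
  ∀ μ : Rw B C R, Rw.IsMultistep μ → WT S μ → ∃ N, ∀ p, Unfolding S μ p → p.1.length ≤ N

namespace Tm

variable {B C : Type}

def up (σ : ℕ → Tm B C) : ℕ → Tm B C
  | 0 => .var 0
  | m + 1 => shift 1 0 (σ m)

def cons (u : Tm B C) (σ : ℕ → Tm B C) : ℕ → Tm B C
  | 0 => u
  | m + 1 => σ m

def substEnv (k : ℕ) (u : Tm B C) (n : ℕ) : Tm B C :=
  if n = k then shift k 0 u else if k < n then .var (n - 1) else .var n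

theorem psubst_lam (σ : ℕ → Tm B C) (t : Tm B C) :
    psubst σ (.lam t) = .lam (psubst (up σ) t) :=
  rfl

theorem shift_zero (c : ℕ) (t : Tm B C) : shift 0 c t = t := by
  induction t generalizing c <;> simp_all [shift]

theorem shift_shift_one_comm {c' c : ℕ} (h : c' ≤ c) (d : ℕ) (t : Tm B C) :
    shift d (c + 1) (shift 1 c' t) = shift 1 c' (shift d c t) := by
  induction t generalizing c c' with
  | var n => simp only [shift]; split_ifs <;> simp only [shift] <;> split_ifs <;> simp <;> omega
  | const => rfl
  | lam t ih => simp [shift, ih (Nat.succ_le_succ h)]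
  | app t u iht ihu => simp [shift, iht h, ihu h]

theorem shift_shift_add (a b c : ℕ) (t : Tm B C) :
    shift a c (shift b c t) = shift (a + b) c t := by
  induction t generalizing c with
  | var n => simp only [shift]; split_ifs <;> simp only [shift] <;> split_ifs <;> simp <;> omega
  | const => rfl
  | lam t ih => simp [shift, ih]
  | app t u iht ihu => simp [shift, iht, ihu]

theorem psubst_var (t : Tm B C) : psubst .var t = t := by
  induction t with
  | var => rfl
  | const => rfl
  | lam t ih =>
    rw [psubst_lam]
    convert congrArg Tm.lam ih using 3
    funext n; cases n <;> simp [up, shift]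
  | app t u iht ihu => exact congrArg₂ Tm.app iht ihu

theorem psubst_shift (σ : ℕ → Tm B C) (d c : ℕ) (t : Tm B C) :
    psubst σ (shift d c t) = psubst (fun n => if n < c then σ n else σ (n + d)) t := by
  induction t generalizing σ c with
  | var n => by_cases n < c <;> simp [shift, psubst, *]
  | const => rfl
  | lam t ih =>
    simp only [shift, psubst_lam, ih]
    congr 2; funext n
    cases n with
    | zero => simp [up]
    | succ m => by_cases m < c <;> simp [up, *, Nat.add_right_comm m 1 d]
  | app t u iht ihu => exact congrArg₂ Tm.app (iht σ c) (ihu σ c)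

theorem shift_psubst (σ : ℕ → Tm B C) (d c : ℕ) (t : Tm B C) :
    shift d c (psubst σ t) = psubst (fun n => shift d c (σ n)) t := by
  induction t generalizing σ c with
  | var => rfl
  | const => rfl
  | lam t ih =>
    simp only [psubst_lam, shift, ih]
    congr 2; funext n
    cases n with
    | zero => simp [up, shift]
    | succ m => simp [up, shift_shift_one_comm (Nat.zero_le c)]
  | app t u iht ihu => exact congrArg₂ Tm.app (iht σ c) (ihu σ c)

theorem psubst_psubst (σ τ : ℕ → Tm B C) (t : Tm B C) :
    psubst τ (psubst σ t) = psubst (fun n => psubst τ (σ n)) t := by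
  induction t generalizing σ τ with
  | var => rfl
  | const => rfl
  | lam t ih =>
    simp only [psubst_lam, ih]
    congr 2; funext n
    cases n with
    | zero => rfl
    | succ m => simp [up, psubst_shift, shift_psubst]
  | app t u iht ihu => exact congrArg₂ Tm.app (iht σ τ) (ihu σ τ)

theorem shift_eq_psubst (d c : ℕ) (t : Tm B C) :
    shift d c t = psubst (fun n => if n < c then .var n else .var (n + d)) t := by
  simpa only [psubst_var] using psubst_shift .var d c t

theorem subst_eq_psubst (k : ℕ) (u t : Tm B C) : t.subst k u = psubst (substEnv k u) t := by
  induction t generalizing k with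
  | var => rfl
  | const => rfl
  | lam t ih =>
    simp only [subst, psubst_lam, ih]
    congr 2; funext n
    cases n with
    | zero => simp [substEnv, up]
    | succ m =>
      simp only [substEnv, up]
      by_cases m = k <;> by_cases k < m <;> simp [shift, shift_shift_add, *, Nat.add_comm 1]
      omega
  | app t s iht ihs => exact congrArg₂ Tm.app (iht k) (ihs k)

theorem substEnv_self (k : ℕ) (u : Tm B C) : substEnv k u k = shift k 0 u := by
  simp [substEnv]

theorem substEnv_of_lt {k n : ℕ} (h : n < k) (u : Tm B C) : substEnv k u n = .var n := by
  simp [substEnv, h.ne, h.not_gt]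

theorem substEnv_of_gt {k n : ℕ} (h : k < n) (u : Tm B C) : substEnv k u n = .var (n - 1) := by
  simp [substEnv, h.ne', h]

theorem subst_shift_one (k : ℕ) (u t : Tm B C) : (shift 1 k t).subst k u = t := by
  rw [subst_eq_psubst, psubst_shift]
  conv_rhs => rw [← psubst_var t]
  congr 1; funext n
  split_ifs with h
  · exact substEnv_of_lt h u
  · simp [substEnv_of_gt (show k < n + 1 by omega)]

theorem subst_succ_shift_one (k : ℕ) (u s : Tm B C) :
    (shift 1 0 s).subst (k + 1) u = shift 1 0 (s.subst k u) := by
  rw [subst_eq_psubst, subst_eq_psubst, psubst_shift, shift_psubst]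
  congr 1; funext n
  rcases lt_trichotomy n k with h | rfl | h
  · simp [substEnv_of_lt, h, shift]
  · simp [substEnv_self, shift_shift_add, Nat.add_comm 1]
  · simp [substEnv_of_gt, h, shift]; omega

theorem subst_subst_zero (k : ℕ) (s r u : Tm B C) :
    (s.subst 0 r).subst k u = (s.subst (k + 1) u).subst 0 (r.subst k u) := by
  simp only [subst_eq_psubst, psubst_psubst]
  congr 1; funext n
  rcases n with _ | m
  · simp [substEnv_self, substEnv_of_lt, shift_zero, psubst]
  rcases lt_trichotomy m k with h | rfl | h
  · simp [substEnv_of_lt, substEnv_of_gt, h, psubst]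
  · rw [substEnv_of_gt m.succ_pos, substEnv_self, Nat.succ_sub_one, psubst, substEnv_self,
      psubst_shift, shift_eq_psubst]
    simp [substEnv_of_gt]
  · simp [substEnv_of_gt, h, psubst, show 0 < m by omega]

theorem subst_zero_psubst_up (σ : ℕ → Tm B C) (u t : Tm B C) :
    (psubst (up σ) t).subst 0 u = psubst (cons u σ) t := by
  rw [subst_eq_psubst, psubst_psubst]
  congr 1; funext n
  rcases n with _ | m
  · simp [up, cons, psubst, substEnv, shift_zero]
  · simp only [up, cons, psubst_shift]
    conv_rhs => rw [← psubst_var (σ m)]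
    simp [substEnv_of_gt]

end Tm

section StrongNormalization

variable {B C : Type}

open Tm

theorem BetaEtaStep.subst {t t' : Tm B C} (h : BetaEtaStep t t') (k : ℕ) (u : Tm B C) :
    BetaEtaStep (t.subst k u) (t'.subst k u) := by
  induction h generalizing k with
  | beta =>
    rw [subst_subst_zero]
    exact .beta
  | @eta t =>
    have hvar : (Tm.var 0 : Tm B C).subst (k + 1) u = .var 0 := by simp [Tm.subst]
    change BetaEtaStep (.lam (.app ((shift 1 0 t).subst (k + 1) u) ((Tm.var 0).subst (k + 1) u))) _
    rw [hvar, subst_succ_shift_one]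
    exact .eta
  | lam _ ih => exact .lam (ih _)
  | appL _ ih => exact .appL (ih _)
  | appR _ ih => exact .appR (ih _)

def Reducible : Ty B → Tm B C → Prop
  | .base _, t => Acc (flip BetaEtaStep) t
  | .arrow A A', t => ∀ u, Reducible A u → Reducible A' (.app t u)

def Tm.Neutral : Tm B C → Prop
  | .lam _ => False
  | _ => True

structure IsCandidate (P : Tm B C → Prop) : Prop where
  acc : ∀ {t}, P t → Acc (flip BetaEtaStep) t
  of_step : ∀ {t t'}, P t → BetaEtaStep t t' → P t'
  of_neutral : ∀ {t}, t.Neutral → (∀ t', BetaEtaStep t t' → P t') → P t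

theorem isCandidate_reducible (A : Ty B) : IsCandidate (Reducible (C := C) A) := by
  induction A with
  | base b => exact ⟨id, fun h hs => h.inv hs, fun _ h => Acc.intro _ h⟩
  | arrow A A' ihA ihA' =>
    have hvar : Reducible A (.var 0 : Tm B C) := ihA.of_neutral trivial fun _ hs => nomatch hs
    refine ⟨fun ht => ?_, fun ht hs u hu => ihA'.of_step (ht u hu) (.appL hs), ?_⟩
    · exact Subrelation.accessible (fun hs => .appL hs)
        (InvImage.accessible (fun s => Tm.app s (.var 0)) (ihA'.acc (ht _ hvar)))
    · intro t ht hred u hu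
      induction ihA.acc hu with
      | intro u _ ih =>
        refine ihA'.of_neutral trivial fun w hw => ?_
        cases hw with
        | beta => exact ht.elim
        | appL h => exact hred _ h u hu
        | appR h => exact ih _ h (ihA.of_step hu h)

theorem reducible_var (A : Ty B) (n : ℕ) : Reducible A (.var n : Tm B C) :=
  (isCandidate_reducible A).of_neutral trivial fun _ hs => nomatch hs

theorem reducible_const (A : Ty B) (c : C) : Reducible A (.const c : Tm B C) :=
  (isCandidate_reducible A).of_neutral trivial fun _ hs => nomatch hs

theorem reducible_app_lam {A A' : Ty B} {t : Tm B C} (ht : Acc (flip BetaEtaStep) t)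
    (hsubst : ∀ v, Reducible A v → Reducible A' (t.subst 0 v)) {u : Tm B C}
    (hu : Reducible A u) : Reducible A' (.app (.lam t) u) := by
  have cA := isCandidate_reducible (C := C) A
  have cA' := isCandidate_reducible (C := C) A'
  induction ht generalizing u with
  | intro t _ iht =>
    induction cA.acc hu with
    | intro u _ ihu =>
      refine cA'.of_neutral trivial fun w hw => ?_
      cases hw with
      | beta => exact hsubst u hu
      | appL hl =>
        cases hl with
        | lam h => exact iht _ h (fun v hv => cA'.of_step (hsubst v hv) (h.subst 0 v)) hu
        | eta => simpa [Tm.subst, subst_shift_one, shift_zero] using hsubst u hu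
      | appR h => exact ihu _ h (cA.of_step hu h)

theorem reducible_lam {A A' : Ty B} {t : Tm B C}
    (h : ∀ u, Reducible A u → Reducible A' (t.subst 0 u)) : Reducible (.arrow A A') (.lam t) :=
  fun _ hu => reducible_app_lam
    (Subrelation.accessible (fun hs => hs.subst 0 (.var 0))
      (InvImage.accessible (fun s : Tm B C => s.subst 0 (.var 0))
        ((isCandidate_reducible A').acc (h _ (reducible_var A 0)))))
    h hu

theorem TmTy.reducible_psubst {sig : C → Ty B} {Γ : List (Ty B)} {t : Tm B C} {A : Ty B}
    (h : TmTy sig Γ t A) {σ : ℕ → Tm B C} (hσ : ∀ n A', Γ[n]? = some A' → Reducible A' (σ n)) :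
    Reducible A (psubst σ t) := by
  induction h generalizing σ with
  | var hΓ => exact hσ _ _ hΓ
  | const => exact reducible_const _ _
  | lam _ ih =>
    rw [psubst_lam]
    refine reducible_lam fun u hu => ?_
    rw [subst_zero_psubst_up]
    refine ih fun n A' hn => ?_
    cases n with
    | zero => cases hn; exact hu
    | succ m => exact hσ m A' hn
  | app _ _ ihf iha => exact ihf hσ _ (iha hσ)

theorem TmTy.acc_betaEtaStep {sig : C → Ty B} {Γ : List (Ty B)} {t : Tm B C} {A : Ty B}
    (h : TmTy sig Γ t A) : Acc (flip BetaEtaStep) t := by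
  have := h.reducible_psubst (σ := .var) fun n A' _ => reducible_var A' n
  rw [psubst_var] at this
  exact (isCandidate_reducible A).acc this

end StrongNormalization

section Erasure

variable {B C R : Type}

inductive FBetaEtaStepRaw : Rw B C R → Rw B C R → Prop
  | betaM : Rw.IsMultistep μ → Rw.IsMultistep ν →
      FBetaEtaStepRaw (.app (.lam μ) ν) (Rw.substR μ 0 ν)
  | etaM : Rw.IsMultistep μ → FBetaEtaStepRaw (.lam (.app (Rw.shiftR 1 0 μ) (.var 0))) μ
  | congLam : FBetaEtaStepRaw ρ ρ' → FBetaEtaStepRaw (.lam ρ) (.lam ρ')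
  | congAppL : FBetaEtaStepRaw ρ ρ' → FBetaEtaStepRaw (.app ρ σ) (.app ρ' σ)
  | congAppR : FBetaEtaStepRaw σ σ' → FBetaEtaStepRaw (.app ρ σ) (.app ρ σ')
  | congCompL : FBetaEtaStepRaw ρ ρ' → FBetaEtaStepRaw (.comp ρ σ) (.comp ρ' σ)
  | congCompR : FBetaEtaStepRaw σ σ' → FBetaEtaStepRaw (.comp ρ σ) (.comp ρ σ')

def FBetaEtaStep (S : HRS B C R) (ρ σ : Rw B C R) : Prop := FBetaEtaStepRaw ρ σ ∧ WT S ρ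

namespace Rw

theorem IsMultistep.shiftR {μ : Rw B C R} (h : μ.IsMultistep) (d c : ℕ) :
    (shiftR d c μ).IsMultistep := by
  induction μ generalizing c with
  | var n => unfold Rw.shiftR; split <;> trivial
  | lam _ ih => exact ih h _
  | app _ _ ih₁ ih₂ => exact ⟨ih₁ h.1 c, ih₂ h.2 c⟩
  | comp => exact h.elim
  | _ => trivial

theorem IsMultistep.substR {μ ν : Rw B C R} (hμ : μ.IsMultistep) (hν : ν.IsMultistep) (k : ℕ) :
    (substR μ k ν).IsMultistep := by
  induction μ generalizing k with
  | var n => unfold Rw.substR; split_ifs <;> first | exact hν.shiftR k 0 | trivial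
  | lam _ ih => exact ih hμ _
  | app _ _ ih₁ ih₂ => exact ⟨ih₁ hμ.1 k, ih₂ hμ.2 k⟩
  | comp => exact hμ.elim
  | _ => trivial

end Rw

theorem Tm.isMultistep_toRw (t : Tm B C) : (Tm.toRw t : Rw B C R).IsMultistep := by
  induction t with
  | lam _ ih => exact ih
  | app _ _ ih₁ ih₂ => exact ⟨ih₁, ih₂⟩
  | _ => trivial

theorem FBetaEtaStepRaw.isMultistep_iff {ρ σ : Rw B C R} (h : FBetaEtaStepRaw ρ σ) :
    ρ.IsMultistep ↔ σ.IsMultistep := by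
  induction h with
  | betaM hμ hν => exact ⟨fun _ => hμ.substR hν 0, fun _ => ⟨hμ, hν⟩⟩
  | etaM hμ => exact ⟨fun _ => hμ, fun _ => ⟨hμ.shiftR 1 0, trivial⟩⟩
  | congLam _ ih => exact ih
  | congAppL _ ih => exact and_congr_left' ih
  | congAppR _ ih => exact and_congr_right' ih
  | congCompL | congCompR => exact Iff.rfl

-- Faithful on multisteps only; on `ρ;σ` it merely keeps a term of the right type.
def Rw.erase : Rw B C R → Tm B (C ⊕ R)
  | .var n => .var n
  | .const c => .const (.inl c)
  | .rule r => .const (.inr r)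
  | .lam ρ => .lam ρ.erase
  | .app ρ σ => .app ρ.erase σ.erase
  | .comp _ σ => σ.erase

theorem Rw.erase_shiftR (d c : ℕ) (ρ : Rw B C R) : (shiftR d c ρ).erase = Tm.shift d c ρ.erase := by
  induction ρ generalizing c with
  | var n => by_cases n < c <;> simp [shiftR, erase, Tm.shift, *]
  | const | rule => rfl
  | lam _ ih => exact congrArg Tm.lam (ih _)
  | app _ _ ih₁ ih₂ => exact congrArg₂ Tm.app (ih₁ c) (ih₂ c)
  | comp _ _ _ ih₂ => exact ih₂ c

theorem Rw.erase_substR (k : ℕ) (ρ ν : Rw B C R) :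
    (substR ρ k ν).erase = ρ.erase.subst k ν.erase := by
  induction ρ generalizing k with
  | var n => by_cases n = k <;> by_cases k < n <;> simp [substR, erase, Tm.subst, erase_shiftR, *]
  | const | rule => rfl
  | lam _ ih => exact congrArg Tm.lam (ih _)
  | app _ _ ih₁ ih₂ => exact congrArg₂ Tm.app (ih₁ k) (ih₂ k)
  | comp _ _ _ ih₂ => exact ih₂ k

def HRS.erasedSig (S : HRS B C R) : C ⊕ R → Ty B
  | .inl c => S.sig c
  | .inr r => S.ruleTy r

theorem RwTy.tmTy_erase {S : HRS B C R} {Γ : List (Ty B)} {ρ : Rw B C R} {s t : Tm B C}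
    {A : Ty B} (h : RwTy S Γ ρ s t A) : TmTy S.erasedSig Γ ρ.erase A := by
  induction h with
  | var h => exact .var h
  | const => exact .const (c := Sum.inl _)
  | rule => exact .const (c := Sum.inr _)
  | abs _ ih => exact .lam ih
  | app _ _ ih₁ ih₂ => exact .app ih₁ ih₂
  | comp _ _ _ ih₂ => exact ih₂
  | conv _ _ _ ih => exact ih

theorem FBetaEtaStepRaw.betaEtaStep_erase {ρ σ : Rw B C R} (h : FBetaEtaStepRaw ρ σ)
    (hρ : ρ.IsMultistep) : BetaEtaStep ρ.erase σ.erase := by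
  induction h with
  | betaM =>
    rw [Rw.erase_substR]
    exact .beta
  | etaM =>
    change BetaEtaStep (.lam (.app (Rw.shiftR 1 0 _).erase (.var 0))) _
    rw [Rw.erase_shiftR]
    exact .eta
  | congLam _ ih => exact .lam (ih hρ)
  | congAppL _ ih => exact .appL (ih hρ.1)
  | congAppR _ ih => exact .appR (ih hρ.2)
  | congCompL | congCompR => exact hρ.elim

theorem WT.of_lam {S : HRS B C R} {ρ : Rw B C R} (h : WT S (.lam ρ)) : WT S ρ := by
  obtain ⟨Γ, s, t, A, h⟩ := h
  generalize e : Rw.lam ρ = ρ₀ at h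
  induction h with
  | abs h => cases e; exact ⟨_, _, _, _, h⟩
  | conv _ _ _ ih => exact ih e
  | _ => cases e

theorem WT.of_app {S : HRS B C R} {ρ σ : Rw B C R} (h : WT S (.app ρ σ)) : WT S ρ ∧ WT S σ := by
  obtain ⟨Γ, s, t, A, h⟩ := h
  generalize e : Rw.app ρ σ = ρ₀ at h
  induction h with
  | app h₁ h₂ => cases e; exact ⟨⟨_, _, _, _, h₁⟩, ⟨_, _, _, _, h₂⟩⟩
  | conv _ _ _ ih => exact ih e
  | _ => cases e

theorem WT.of_comp {S : HRS B C R} {ρ σ : Rw B C R} (h : WT S (.comp ρ σ)) : WT S ρ ∧ WT S σ := by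
  obtain ⟨Γ, s, t, A, h⟩ := h
  generalize e : Rw.comp ρ σ = ρ₀ at h
  induction h with
  | comp h₁ h₂ => cases e; exact ⟨⟨_, _, _, _, h₁⟩, ⟨_, _, _, _, h₂⟩⟩
  | conv _ _ _ ih => exact ih e
  | _ => cases e

end Erasure

section BetaEtaFragment

variable {B C R : Type} {S : HRS B C R}

theorem acc_fBetaEtaStep_of_acc_erase {μ : Rw B C R} (hμ : μ.IsMultistep)
    (h : Acc (flip BetaEtaStep) μ.erase) : Acc (flip (FBetaEtaStep S)) μ := by
  generalize e : μ.erase = u at h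
  induction h generalizing μ with
  | intro u _ ih =>
    exact Acc.intro μ fun ν hν =>
      ih _ (e ▸ hν.1.betaEtaStep_erase hμ) (hν.1.isMultistep_iff.1 hμ) rfl

theorem acc_fBetaEtaStep_of_isMultistep {μ : Rw B C R} (hμ : μ.IsMultistep) :
    Acc (flip (FBetaEtaStep S)) μ := by
  by_cases hwt : WT S μ
  · obtain ⟨Γ, s, t, A, h⟩ := hwt
    exact acc_fBetaEtaStep_of_acc_erase hμ h.tmTy_erase.acc_betaEtaStep
  · exact Acc.intro μ fun _ hν => absurd hν.2 hwt

theorem acc_fBetaEtaStep_lam {ρ : Rw B C R} (h : Acc (flip (FBetaEtaStep S)) ρ) :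
    Acc (flip (FBetaEtaStep S)) (.lam ρ) := by
  by_cases hms : (Rw.lam ρ).IsMultistep
  · exact acc_fBetaEtaStep_of_isMultistep hms
  induction h with
  | intro ρ _ ih =>
    refine Acc.intro _ fun σ ⟨hstep, hwt⟩ => ?_
    have hσ : ¬ σ.IsMultistep := mt hstep.isMultistep_iff.2 hms
    cases hstep with
    | etaM hμ => exact absurd hμ hσ
    | congLam h => exact ih _ ⟨h, hwt.of_lam⟩ hσ

theorem acc_fBetaEtaStep_app {ρ σ : Rw B C R} (hρ : Acc (flip (FBetaEtaStep S)) ρ)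
    (hσ : Acc (flip (FBetaEtaStep S)) σ) : Acc (flip (FBetaEtaStep S)) (.app ρ σ) := by
  by_cases hms : (Rw.app ρ σ).IsMultistep
  · exact acc_fBetaEtaStep_of_isMultistep hms
  induction hρ generalizing σ with
  | intro ρ _ ihρ =>
    induction hσ with
    | intro σ hσ ihσ =>
      refine Acc.intro _ fun τ ⟨hstep, hwt⟩ => ?_
      have hτ : ¬ τ.IsMultistep := mt hstep.isMultistep_iff.2 hms
      cases hstep with
      | betaM hμ hν => exact absurd (hμ.substR hν 0) hτ
      | congAppL h => exact ihρ _ ⟨h, hwt.of_app.1⟩ (.intro σ hσ) hτ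
      | congAppR h => exact ihσ _ ⟨h, hwt.of_app.2⟩ hτ

theorem acc_fBetaEtaStep_comp {ρ σ : Rw B C R} (hρ : Acc (flip (FBetaEtaStep S)) ρ)
    (hσ : Acc (flip (FBetaEtaStep S)) σ) : Acc (flip (FBetaEtaStep S)) (.comp ρ σ) := by
  induction hρ generalizing σ with
  | intro ρ _ ihρ =>
    induction hσ with
    | intro σ hσ ihσ =>
      refine Acc.intro _ fun τ ⟨hstep, hwt⟩ => ?_
      cases hstep with
      | congCompL h => exact ihρ _ ⟨h, hwt.of_comp.1⟩ (.intro σ hσ)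
      | congCompR h => exact ihσ _ ⟨h, hwt.of_comp.2⟩

theorem wellFounded_fBetaEtaStep (S : HRS B C R) : WellFounded (flip (FBetaEtaStep S)) := by
  refine ⟨fun ρ => ?_⟩
  induction ρ with
  | lam _ ih => exact acc_fBetaEtaStep_lam ih
  | app _ _ ihρ ihσ => exact acc_fBetaEtaStep_app ihρ ihσ
  | comp _ _ ihρ ihσ => exact acc_fBetaEtaStep_comp ihρ ihσ
  | _ => exact acc_fBetaEtaStep_of_isMultistep trivial

end BetaEtaFragment

section Measure

variable {B C R : Type}

namespace Rw

def weight : Rw B C R → ℕ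
  | .lam ρ => ρ.weight
  | .app ρ σ => ρ.weight * ρ.weight * (σ.weight * σ.weight)
  | .comp ρ σ => ρ.weight + σ.weight + 1
  | _ => 1

def numComp : Rw B C R → ℕ
  | .lam ρ => ρ.numComp
  | .app ρ σ => ρ.numComp + σ.numComp
  | .comp ρ σ => ρ.numComp + σ.numComp + 1
  | _ => 0

-- The sum, over all compositions, of the number of abstractions above it.
def compLamDepth : Rw B C R → ℕ
  | .lam ρ => ρ.compLamDepth + ρ.numComp
  | .app ρ σ => ρ.compLamDepth + σ.compLamDepth
  | .comp ρ σ => ρ.compLamDepth + σ.compLamDepth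
  | _ => 0

theorem one_le_weight (ρ : Rw B C R) : 1 ≤ ρ.weight := by
  induction ρ with
  | lam _ ih => exact ih
  | app _ _ ih₁ ih₂ => exact Nat.mul_pos (Nat.mul_pos ih₁ ih₁) (Nat.mul_pos ih₂ ih₂)
  | comp => simp [weight]
  | _ => exact le_rfl

theorem IsMultistep.weight_numComp_compLamDepth {μ : Rw B C R} (h : μ.IsMultistep) :
    μ.weight = 1 ∧ μ.numComp = 0 ∧ μ.compLamDepth = 0 := by
  induction μ with
  | lam _ ih => obtain ⟨h₁, h₂, h₃⟩ := ih h; simp [weight, numComp, compLamDepth, *]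
  | app _ _ ih₁ ih₂ =>
    obtain ⟨h₁, h₂, h₃⟩ := ih₁ h.1
    obtain ⟨h₄, h₅, h₆⟩ := ih₂ h.2
    simp [weight, numComp, compLamDepth, *]
  | comp => exact h.elim
  | _ => simp [weight, numComp, compLamDepth]

end Rw

-- `numComp` is tracked because the `compLamDepth` of an abstraction depends on it.
def FDecrease (ρ σ : Rw B C R) : Prop :=
  σ.weight < ρ.weight ∨ σ.weight = ρ.weight ∧ σ.numComp = ρ.numComp ∧
    (σ.compLamDepth < ρ.compLamDepth ∨
      σ.compLamDepth = ρ.compLamDepth ∧ FBetaEtaStepRaw ρ σ)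

namespace FDecrease

variable {ρ ρ' : Rw B C R}

theorem lam (h : FDecrease ρ ρ') : FDecrease (.lam ρ) (.lam ρ') := by
  simp only [FDecrease, Rw.weight, Rw.numComp, Rw.compLamDepth] at h ⊢
  rcases h with h | ⟨h₁, h₂, h | ⟨h₃, h⟩⟩
  · exact .inl h
  · exact .inr ⟨h₁, h₂, .inl (by omega)⟩
  · exact .inr ⟨h₁, h₂, .inr ⟨by omega, .congLam h⟩⟩

theorem appL (h : FDecrease ρ ρ') (σ : Rw B C R) : FDecrease (.app ρ σ) (.app ρ' σ) := by
  simp only [FDecrease, Rw.weight, Rw.numComp, Rw.compLamDepth] at h ⊢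
  have := σ.one_le_weight
  rcases h with h | ⟨h₁, h₂, h | ⟨h₃, h⟩⟩
  · left; gcongr
  · exact .inr ⟨by rw [h₁], by omega, .inl (by omega)⟩
  · exact .inr ⟨by rw [h₁], by omega, .inr ⟨by omega, .congAppL h⟩⟩

theorem appR (h : FDecrease ρ ρ') (σ : Rw B C R) : FDecrease (.app σ ρ) (.app σ ρ') := by
  simp only [FDecrease, Rw.weight, Rw.numComp, Rw.compLamDepth] at h ⊢
  have := σ.one_le_weight
  rcases h with h | ⟨h₁, h₂, h | ⟨h₃, h⟩⟩
  · left; gcongr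
  · exact .inr ⟨by rw [h₁], by omega, .inl (by omega)⟩
  · exact .inr ⟨by rw [h₁], by omega, .inr ⟨by omega, .congAppR h⟩⟩

theorem compL (h : FDecrease ρ ρ') (σ : Rw B C R) : FDecrease (.comp ρ σ) (.comp ρ' σ) := by
  simp only [FDecrease, Rw.weight, Rw.numComp, Rw.compLamDepth] at h ⊢
  rcases h with h | ⟨h₁, h₂, h | ⟨h₃, h⟩⟩
  · exact .inl (by omega)
  · exact .inr ⟨by omega, by omega, .inl (by omega)⟩
  · exact .inr ⟨by omega, by omega, .inr ⟨by omega, .congCompL h⟩⟩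

theorem compR (h : FDecrease ρ ρ') (σ : Rw B C R) : FDecrease (.comp σ ρ) (.comp σ ρ') := by
  simp only [FDecrease, Rw.weight, Rw.numComp, Rw.compLamDepth] at h ⊢
  rcases h with h | ⟨h₁, h₂, h | ⟨h₃, h⟩⟩
  · exact .inl (by omega)
  · exact .inr ⟨by omega, by omega, .inl (by omega)⟩
  · exact .inr ⟨by omega, by omega, .inr ⟨by omega, .congCompR h⟩⟩

end FDecrease

theorem add_add_one_lt_mul_of_three_le {P Q : ℕ} (hP : 3 ≤ P) (hQ : 3 ≤ Q) : P + Q + 1 < P * Q := by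
  nlinarith

theorem FDecrease.of_isMultistep {μ ν : Rw B C R} (hμ : μ.IsMultistep) (hν : ν.IsMultistep)
    (h : FBetaEtaStepRaw μ ν) : FDecrease μ ν := by
  obtain ⟨hμ₁, hμ₂, hμ₃⟩ := hμ.weight_numComp_compLamDepth
  obtain ⟨hν₁, hν₂, hν₃⟩ := hν.weight_numComp_compLamDepth
  exact .inr ⟨by rw [hμ₁, hν₁], by rw [hμ₂, hν₂], .inr ⟨by rw [hμ₃, hν₃], h⟩⟩

theorem FStepRaw.fDecrease {S : HRS B C R} {ρ σ : Rw B C R} (h : FStepRaw S ρ σ) :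
    FDecrease ρ σ := by
  induction h with
  | abs => exact .inr ⟨rfl, rfl, .inl (by simp only [Rw.compLamDepth, Rw.numComp]; omega)⟩
  | @app1 μ ρ σ hμ =>
    left
    simp only [Rw.weight, (Tm.isMultistep_toRw _).weight_numComp_compLamDepth.1,
      hμ.weight_numComp_compLamDepth.1]
    nlinarith [ρ.one_le_weight, σ.one_le_weight]
  | @app2 μ ρ σ hμ =>
    left
    simp only [Rw.weight, (Tm.isMultistep_toRw _).weight_numComp_compLamDepth.1,
      hμ.weight_numComp_compLamDepth.1]
    nlinarith [ρ.one_le_weight, σ.one_le_weight]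
  | @app3 ρ₁ ρ₂ σ₁ σ₂ =>
    have hρ : 3 ≤ ρ₁.weight + ρ₂.weight + 1 := by linarith [ρ₁.one_le_weight, ρ₂.one_le_weight]
    have hσ : 3 ≤ σ₁.weight + σ₂.weight + 1 := by linarith [σ₁.one_le_weight, σ₂.one_le_weight]
    left
    simpa [Rw.weight, (Tm.isMultistep_toRw _).weight_numComp_compLamDepth.1] using
      add_add_one_lt_mul_of_three_le (hρ.trans (Nat.le_mul_self _)) (hσ.trans (Nat.le_mul_self _))
  | betaM hμ hν => exact .of_isMultistep ⟨hμ, hν⟩ (hμ.substR hν 0) (.betaM hμ hν)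
  | etaM hμ => exact .of_isMultistep ⟨hμ.shiftR 1 0, trivial⟩ hμ (.etaM hμ)
  | congLam _ ih => exact ih.lam
  | congAppL _ ih => exact ih.appL _
  | congAppR _ ih => exact ih.appR _
  | congCompL _ ih => exact ih.compL _
  | congCompR _ ih => exact ih.compR _

theorem FStep.lex_lt {S : HRS B C R} {ρ σ : Rw B C R} (h : FStep S ρ σ) :
    Prod.Lex (· < ·) (Prod.Lex (· < ·) (flip (FBetaEtaStep S)))
      (σ.weight, σ.compLamDepth, σ) (ρ.weight, ρ.compLamDepth, ρ) := by
  simp only [Prod.lex_def]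
  rcases h.1.fDecrease with h' | ⟨h₁, -, h' | ⟨h₃, h'⟩⟩
  · exact .inl h'
  · exact .inr ⟨h₁, .inl h'⟩
  · exact .inr ⟨h₁, .inr ⟨h₃, h', h.2⟩⟩

end Measure

end HOR

open HOR in
/-- the flattening system `F` is strongly normalizing:
there is no infinite sequence of `↦`-steps. -/
theorem statement4 {B C R : Type} (S : HRS B C R) (hOrth : Orthogonal S) :
    WellFounded (fun a b : Rw B C R => FStep S b a) :=
  Subrelation.wf (fun h => h.lex_lt)
    (InvImage.wf (fun ρ : Rw B C R => (ρ.weight, ρ.compLamDepth, ρ))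
      (wellFounded_lt.prod_lex (wellFounded_lt.prod_lex (wellFounded_fBetaEtaStep S))))
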